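/- arXiv:2402.00400 — 2 statements merged into one kernel-verified Lean document; each statement's English description precedes it below -/
import Mathlib

section
/- Let M be a product of finitely many matrices, each equal to L = [[1,1],[0,1]] or R = [[1,0],[1,1]], in which both L and R occur at least once. Then the trace of M is strictly greater than 2. Hence M represents a hyperbolic element of PSL(2,ℤ). -/
open Matrix

/-!
In the monoid of matrices with nonnegative entries and diagonal entries at least one, every factor
of a product is entrywise at most the product, since `(A * B) i j ≥ A i j * B j j ≥ A i j`. Hence a
product of copies of `L` and `R` containing both has all four entries positive. For such a matrix
of determinant one, `(a + d)² ≥ 4ad = 4(1 + bc) > 4`.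
-/

namespace Matrix

variable {n R : Type*} [Fintype n] [DecidableEq n] [Semiring R] [PartialOrder R] [IsOrderedRing R]

variable (n R) in
def nonnegOneLeDiagSubmonoid : Submonoid (Matrix n n R) where
  carrier := {A | (∀ i j, 0 ≤ A i j) ∧ ∀ i, 1 ≤ A i i}
  one_mem' := by
    refine ⟨fun i j => ?_, fun i => by simp⟩
    rw [one_apply]
    split_ifs <;> simp
  mul_mem' := by
    rintro A B ⟨hA, hA₁⟩ ⟨hB, hB₁⟩
    refine ⟨fun i j => Finset.sum_nonneg fun k _ => mul_nonneg (hA i k) (hB k j), fun i => ?_⟩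
    calc (1 : R) ≤ A i i * B i i := one_le_mul_of_one_le_of_one_le (hA₁ i) (hB₁ i)
      _ ≤ (A * B) i i :=
        Finset.single_le_sum (fun k _ => mul_nonneg (hA i k) (hB k i)) (Finset.mem_univ i)

variable {A B : Matrix n n R}

theorem apply_le_mul_apply_left (hA : A ∈ nonnegOneLeDiagSubmonoid n R)
    (hB : B ∈ nonnegOneLeDiagSubmonoid n R) (i j : n) : A i j ≤ (A * B) i j :=
  calc A i j ≤ A i j * B j j := le_mul_of_one_le_right (hA.1 i j) (hB.2 j)
    _ ≤ (A * B) i j :=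
      Finset.single_le_sum (fun k _ => mul_nonneg (hA.1 i k) (hB.1 k j)) (Finset.mem_univ j)

theorem apply_le_mul_apply_right (hA : A ∈ nonnegOneLeDiagSubmonoid n R)
    (hB : B ∈ nonnegOneLeDiagSubmonoid n R) (i j : n) : B i j ≤ (A * B) i j :=
  calc B i j ≤ A i i * B i j := le_mul_of_one_le_left (hB.1 i j) (hA.2 i)
    _ ≤ (A * B) i j :=
      Finset.single_le_sum (fun k _ => mul_nonneg (hA.1 i k) (hB.1 k j)) (Finset.mem_univ i)

theorem apply_le_list_prod_apply {l : List (Matrix n n R)}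
    (hl : ∀ B ∈ l, B ∈ nonnegOneLeDiagSubmonoid n R) (hA : A ∈ l) (i j : n) :
    A i j ≤ l.prod i j := by
  induction l with
  | nil => simp at hA
  | cons B t ih =>
    have hB := hl B List.mem_cons_self
    have ht : ∀ C ∈ t, C ∈ nonnegOneLeDiagSubmonoid n R :=
      fun C hC => hl C (List.mem_cons_of_mem B hC)
    have htprod := Submonoid.list_prod_mem _ ht
    rw [List.prod_cons]
    rcases List.mem_cons.mp hA with rfl | hAt
    · exact apply_le_mul_apply_left hB htprod i j
    · exact (ih ht hAt).trans (apply_le_mul_apply_right hB htprod i j)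

end Matrix

theorem Matrix.two_lt_trace_of_det_eq_one {R : Type*} [CommRing R] [LinearOrder R]
    [IsStrictOrderedRing R] {N : Matrix (Fin 2) (Fin 2) R} (hdet : N.det = 1)
    (h₀₀ : 0 ≤ N 0 0) (h₁₁ : 0 ≤ N 1 1) (h₀₁ : 0 < N 0 1) (h₁₀ : 0 < N 1 0) :
    2 < N.trace := by
  rw [det_fin_two] at hdet
  rw [trace_fin_two]
  nlinarith [sq_nonneg (N 0 0 - N 1 1), mul_pos h₀₁ h₁₀]

/-- A finite product of matrices from {L, R} in which both L and R occur has trace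
strictly greater than 2; hence it represents a hyperbolic element of PSL(2,ℤ)
(the absolute value of its trace exceeds 2). -/
theorem trace_gt_two_of_LR_word
    (L R : Matrix.SpecialLinearGroup (Fin 2) ℤ)
    (hL : (L : Matrix (Fin 2) (Fin 2) ℤ) = !![1, 1; 0, 1])
    (hR : (R : Matrix (Fin 2) (Fin 2) ℤ) = !![1, 0; 1, 1])
    (l : List (Matrix.SpecialLinearGroup (Fin 2) ℤ))
    (hmem : ∀ x ∈ l, x = L ∨ x = R)
    (hLmem : L ∈ l) (hRmem : R ∈ l)
    (M : Matrix.SpecialLinearGroup (Fin 2) ℤ) (hM : M = l.prod) :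
    2 < Matrix.trace ((M : Matrix (Fin 2) (Fin 2) ℤ)) ∧
    2 < |Matrix.trace ((M : Matrix (Fin 2) (Fin 2) ℤ))| := by
  have hword : ∀ B ∈ l.map (↑), B ∈ nonnegOneLeDiagSubmonoid (Fin 2) ℤ := by
    intro B hB
    obtain ⟨x, hx, rfl⟩ := List.mem_map.mp hB
    rcases hmem x hx with rfl | rfl
    · simp [hL, nonnegOneLeDiagSubmonoid, Fin.forall_fin_two]
    · simp [hR, nonnegOneLeDiagSubmonoid, Fin.forall_fin_two]
  have hMprod : (M : Matrix (Fin 2) (Fin 2) ℤ) = (l.map (↑)).prod := by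
    rw [hM, ← SpecialLinearGroup.coeMonoidHom_apply, map_list_prod]
    rfl
  have hLle := apply_le_list_prod_apply hword (List.mem_map_of_mem hLmem)
  have hRle := apply_le_list_prod_apply hword (List.mem_map_of_mem hRmem)
  rw [← hMprod] at hLle hRle
  have h₀₀ : 1 ≤ (M : Matrix (Fin 2) (Fin 2) ℤ) 0 0 := by simpa [hL] using hLle 0 0
  have h₁₁ : 1 ≤ (M : Matrix (Fin 2) (Fin 2) ℤ) 1 1 := by simpa [hR] using hRle 1 1
  have h₀₁ : 1 ≤ (M : Matrix (Fin 2) (Fin 2) ℤ) 0 1 := by simpa [hL] using hLle 0 1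
  have h₁₀ : 1 ≤ (M : Matrix (Fin 2) (Fin 2) ℤ) 1 0 := by simpa [hR] using hRle 1 0
  have htr : 2 < (M : Matrix (Fin 2) (Fin 2) ℤ).trace :=
    two_lt_trace_of_det_eq_one M.det_coe (by omega) (by omega) h₀₁ h₁₀
  exact ⟨htr, htr.trans_le (le_abs_self _)⟩
end

section
/- The matrices L = [[1,1],[0,1]] and R = [[1,0],[1,1]] generate a free monoid inside SL(2,ℤ): if two finite sequences of letters from {L, R} yield the same matrix product, then the sequences are equal. -/
/-!
Every word in `L` and `R` evaluates to a matrix with nonnegative entries. Left multiplication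
by `L` adds the second row to the first and left multiplication by `R` adds the first row to the
second, so `L * P = R * Q` with `P, Q` nonnegative forces the first row of `P` to vanish,
contradicting `det P = 1`, while `L * P = 1` or `R * P = 1` would force a negative entry in `P`.
Hence the product of a nonempty word determines its first letter, and cancelling that letter
gives freeness by induction.
-/

open Matrix

theorem List.injective_prod_map_of_head_determined {β G : Type*} [LeftCancelMonoid G]
    {f : β → G} (hne : ∀ b (t : List β), f b * (t.map f).prod ≠ 1)
    (hhead : ∀ a b (s t : List β), f a * (s.map f).prod = f b * (t.map f).prod → a = b) :
    Function.Injective fun l : List β => (l.map f).prod := by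
  intro l₁
  induction l₁ with
  | nil =>
    rintro (_ | ⟨b, t⟩) h
    · rfl
    · exact absurd h.symm (hne b t)
  | cons a s ih =>
    rintro (_ | ⟨b, t⟩) h
    · exact absurd h (hne a s)
    · simp only [List.map_cons, List.prod_cons] at h
      obtain rfl := hhead a b s t h
      rw [ih (mul_left_cancel h)]

namespace Matrix

theorem mul_apply_nonneg {α n : Type*} [Semiring α] [PartialOrder α] [IsOrderedRing α]
    [Fintype n] {M N : Matrix n n α} (hM : ∀ i j, 0 ≤ M i j) (hN : ∀ i j, 0 ≤ N i j)
    (i j : n) : 0 ≤ (M * N) i j :=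
  Finset.sum_nonneg fun k _ => mul_nonneg (hM i k) (hN k j)

theorem SpecialLinearGroup.list_prod_apply_nonneg {α n : Type*} [CommRing α] [PartialOrder α]
    [IsOrderedRing α] [Fintype n] [DecidableEq n] {l : List (SpecialLinearGroup n α)}
    (hl : ∀ g ∈ l, ∀ i j, 0 ≤ (g : Matrix n n α) i j) (i j : n) :
    0 ≤ (l.prod : Matrix n n α) i j :=
  List.prod_induction (fun g : SpecialLinearGroup n α => ∀ i j, 0 ≤ (g : Matrix n n α) i j)
    (fun g h hg hh => by simpa using mul_apply_nonneg hg hh)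
    (fun i j => by rw [SpecialLinearGroup.coe_one, one_apply]; split_ifs <;> simp) hl i j

variable {α : Type*} [CommRing α] [LinearOrder α] [IsStrictOrderedRing α]
  {P Q : Matrix (Fin 2) (Fin 2) α}

theorem upper_unipotent_mul_ne_one (hP : ∀ i j, 0 ≤ P i j) : !![1, 1; 0, 1] * P ≠ 1 := by
  rw [one_fin_two]
  intro h
  have h01 := congrFun (congrFun h 0) 1
  have h11 := congrFun (congrFun h 1) 1
  simp only [mul_apply, Fin.sum_univ_two, of_apply, cons_val', cons_val_zero, cons_val_one,
      cons_val_fin_one, one_mul, zero_mul, zero_add] at h01 h11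
  linarith [hP 0 1]

theorem lower_unipotent_mul_ne_one (hP : ∀ i j, 0 ≤ P i j) : !![1, 0; 1, 1] * P ≠ 1 := by
  rw [one_fin_two]
  intro h
  have h00 := congrFun (congrFun h 0) 0
  have h10 := congrFun (congrFun h 1) 0
  simp only [mul_apply, Fin.sum_univ_two, of_apply, cons_val', cons_val_zero, cons_val_one,
      cons_val_fin_one, one_mul, zero_mul, add_zero] at h00 h10
  linarith [hP 1 0]

theorem upper_unipotent_mul_ne_lower_unipotent_mul (hP : ∀ i j, 0 ≤ P i j)
    (hQ : ∀ i j, 0 ≤ Q i j) (hdet : P.det ≠ 0) :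
    !![1, 1; 0, 1] * P ≠ !![1, 0; 1, 1] * Q := by
  intro h
  have first_row_eq_zero (j : Fin 2) : P 0 j = 0 := by
    have h0 := congrFun (congrFun h 0) j
    have h1 := congrFun (congrFun h 1) j
    simp only [mul_apply, Fin.sum_univ_two, of_apply, cons_val', cons_val_zero, cons_val_one,
        cons_val_fin_one, one_mul, zero_mul, zero_add, add_zero] at h0 h1
    linarith [hP 0 j, hQ 1 j]
  exact hdet (by simp [det_fin_two, first_row_eq_zero])

end Matrix

/-- L and R generate a free monoid inside SL(2,ℤ): if two finite sequences of letters
from {L, R} (encoded by booleans: `true ↦ L`, `false ↦ R`) yield the same matrix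
product, then the sequences are equal. -/
theorem LR_free_monoid
    (L R : Matrix.SpecialLinearGroup (Fin 2) ℤ)
    (hL : (L : Matrix (Fin 2) (Fin 2) ℤ) = !![1, 1; 0, 1])
    (hR : (R : Matrix (Fin 2) (Fin 2) ℤ) = !![1, 0; 1, 1])
    (f : Bool → Matrix.SpecialLinearGroup (Fin 2) ℤ)
    (hf : f true = L ∧ f false = R) :
    ∀ l₁ l₂ : List Bool, (l₁.map f).prod = (l₂.map f).prod → l₁ = l₂ := by
  have hf_coe (b : Bool) : (f b : Matrix (Fin 2) (Fin 2) ℤ) =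
      if b then !![1, 1; 0, 1] else !![1, 0; 1, 1] := by
    cases b <;> simp [hf.1, hf.2, hL, hR]
  have hword (t : List Bool) : ∀ i j, 0 ≤ ((t.map f).prod : Matrix (Fin 2) (Fin 2) ℤ) i j :=
    SpecialLinearGroup.list_prod_apply_nonneg <| by
      simp only [List.mem_map]
      rintro _ ⟨(_ | _), -, rfl⟩ i j <;> fin_cases i <;> fin_cases j <;> simp [hf_coe]
  have coe_congr {g h : Matrix.SpecialLinearGroup (Fin 2) ℤ} (e : g = h) :
      (g : Matrix (Fin 2) (Fin 2) ℤ) = h :=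
    congrArg _ e
  refine List.injective_prod_map_of_head_determined ?_ ?_
  · rintro (_ | _) t h <;> replace h := coe_congr h <;>
      simp only [Matrix.SpecialLinearGroup.coe_mul, Matrix.SpecialLinearGroup.coe_one, hf_coe] at h
    · exact lower_unipotent_mul_ne_one (hword t) h
    · exact upper_unipotent_mul_ne_one (hword t) h
  · rintro (_ | _) (_ | _) s t h <;> replace h := coe_congr h <;>
      simp only [Matrix.SpecialLinearGroup.coe_mul, hf_coe] at h
    · rfl
    · exact (upper_unipotent_mul_ne_lower_unipotent_mul (hword t) (hword s) (by simp) h.symm).elim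
    · exact (upper_unipotent_mul_ne_lower_unipotent_mul (hword s) (hword t) (by simp) h).elim
    · rfl
end
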